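/- Let G be a group and k a field, and let H = k[G] be the group bialgebra, with Δ(g) = g⊗g and ε(g) = 1 for g ∈ G. Then every co-Hochschild 2-cocycle on H is a coboundary: if φ ∈ H⊗H satisfies 1⊗φ + (I⊗Δ)(φ) = φ⊗1 + (Δ⊗I)(φ), then there exists a ∈ H such that φ = a⊗1 + 1⊗a − Δ(a). -/

import Mathlib

open scoped TensorProduct

noncomputable section

variable (K G : Type*) [Field K] [Group G]

local notation "H" => MonoidAlgebra K G

/-!
Let `π : k[G] → k` take the coefficient at the identity and put `a := (π ⊗ I)(φ)`.
Since `Δ(g) = g ⊗ g`, we have `(π ⊗ I) ∘ Δ = π(·) 1`, so applying `π ⊗ I ⊗ I` to the cocycle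
identity turns it into `φ + Δ(a) = a ⊗ 1 + 1 ⊗ a`. This is the degree-2 instance of the
contracting homotopy `π ⊗ I ⊗ ⋯ ⊗ I` of the co-Hochschild complex.
-/

open TensorProduct LinearMap

section Slant

variable {R A : Type*} [CommRing R] [AddCommGroup A] [Module R A] (π : A →ₗ[R] R)

def leftSlant (M : Type*) [AddCommGroup M] [Module R M] : A ⊗[R] M →ₗ[R] M :=
  TensorProduct.lid R M ∘ₗ rTensor M π

variable {M N : Type*} [AddCommGroup M] [Module R M] [AddCommGroup N] [Module R N]

@[simp]
theorem leftSlant_tmul (x : A) (m : M) : leftSlant π M (x ⊗ₜ m) = π x • m := by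
  simp [leftSlant]

theorem leftSlant_lTensor (f : M →ₗ[R] N) (t : A ⊗[R] M) :
    leftSlant π N (lTensor A f t) = f (leftSlant π M t) := by
  induction t using TensorProduct.induction_on with
  | zero => simp
  | tmul x m => simp
  | add s t hs ht => simp [hs, ht]

theorem leftSlant_assoc (t : (A ⊗[R] M) ⊗[R] N) :
    leftSlant π (M ⊗[R] N) (TensorProduct.assoc R A M N t) = rTensor N (leftSlant π M) t := by
  induction t using TensorProduct.induction_on with
  | zero => simp
  | tmul s n =>
    induction s using TensorProduct.induction_on with
    | zero => simp
    | tmul x m => simp [smul_tmul']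
    | add s s' hs hs' => simp [add_tmul, hs, hs']
  | add s t hs ht => simp [hs, ht]

theorem rTensor_smulRight_eq_tmul_leftSlant (e : M) (t : A ⊗[R] N) :
    rTensor N (π.smulRight e) t = e ⊗ₜ leftSlant π N t := by
  induction t using TensorProduct.induction_on with
  | zero => simp
  | tmul x n => simp [smul_tmul]
  | add s t hs ht => simp [hs, ht, tmul_add]

end Slant

theorem eq_coboundary_leftSlant_of_cocycle {R A : Type*} [CommRing R] [Ring A] [Algebra R A]
    (Δ : A →ₗ[R] A ⊗[R] A) (π : A →ₗ[R] R) (hπ : π 1 = 1)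
    (hπΔ : ∀ x, leftSlant π A (Δ x) = π x • 1) (φ : A ⊗[R] A)
    (hφ : (1 : A) ⊗ₜ[R] φ + lTensor A Δ φ
      = TensorProduct.assoc R A A A (φ ⊗ₜ[R] (1 : A) + rTensor A Δ φ)) :
    φ = leftSlant π A φ ⊗ₜ 1 + 1 ⊗ₜ leftSlant π A φ - Δ (leftSlant π A φ) := by
  have hslant : leftSlant π A ∘ₗ Δ = π.smulRight 1 := by
    ext x; simp [hπΔ]
  have h := congrArg (leftSlant π (A ⊗[R] A)) hφ
  simp only [map_add, leftSlant_assoc, rTensor_tmul, ← rTensor_comp_apply, hslant,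
    rTensor_smulRight_eq_tmul_leftSlant, leftSlant_tmul, leftSlant_lTensor, hπ, one_smul] at h
  exact eq_sub_of_add_eq h

namespace MonoidAlgebra

variable {R M : Type*} [CommRing R] [Monoid M]

theorem basis_coord_one_one : (basis M R).coord 1 (1 : MonoidAlgebra R M) = 1 := by
  rw [one_def, ← basis_apply, Module.Basis.coord_apply, Module.Basis.repr_self,
    Finsupp.single_eq_same]

theorem leftSlant_basis_coord_one_of_comul_of
    (Δ : MonoidAlgebra R M →ₗ[R] MonoidAlgebra R M ⊗[R] MonoidAlgebra R M)
    (hΔ : ∀ m, Δ (of R M m) = of R M m ⊗ₜ of R M m) (x : MonoidAlgebra R M) :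
    leftSlant ((basis M R).coord 1) _ (Δ x) = (basis M R).coord 1 x • 1 := by
  set π := (basis M R).coord 1
  suffices leftSlant π _ ∘ₗ Δ = π.smulRight 1 from LinearMap.congr_fun this x
  refine (basis M R).ext fun m => ?_
  rw [comp_apply, smulRight_apply, basis_apply, ← of_apply, hΔ, leftSlant_tmul]
  obtain rfl | hm := eq_or_ne m 1
  · rw [map_one]
  · have : π (of R M m) = 0 := by
      rw [of_apply, ← basis_apply, Module.Basis.coord_apply, Module.Basis.repr_self,
        Finsupp.single_eq_of_ne' hm]
    rw [this, zero_smul, zero_smul]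

end MonoidAlgebra

theorem groupAlgebra_two_cocycle_is_coboundary
    (Δ' : H →ₐ[K] H ⊗[K] H)
    (hΔ' : ∀ g : G, Δ' (MonoidAlgebra.of K G g)
      = MonoidAlgebra.of K G g ⊗ₜ[K] MonoidAlgebra.of K G g)
    (φ : H ⊗[K] H)
    (hφ : (1 : H) ⊗ₜ[K] φ + LinearMap.lTensor H Δ'.toLinearMap φ
      = TensorProduct.assoc K H H H (φ ⊗ₜ[K] (1 : H) + LinearMap.rTensor H Δ'.toLinearMap φ)) :
    ∃ a : H, φ = a ⊗ₜ[K] (1 : H) + (1 : H) ⊗ₜ[K] a - Δ' a :=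
  ⟨_, eq_coboundary_leftSlant_of_cocycle Δ'.toLinearMap _ MonoidAlgebra.basis_coord_one_one
    (MonoidAlgebra.leftSlant_basis_coord_one_of_comul_of Δ'.toLinearMap hΔ') φ hφ⟩

end
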